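/- arXiv:2210.06149 — 2 statements merged into one kernel-verified Lean document; each statement's English description precedes it below -/
import Mathlib

section
/- Let A ∈ ℂ^{n×n}, B ∈ ℂ^{n×m}, λ ∈ ℂ an eigenvalue of A, and v ∈ ℂ^m a nonzero vector. If v ∈ Bᵀ · ker((λI − A)ᵀ) (i.e. v = Bᵀη for some left eigenvector η of A at λ) and the pair obtained by restricting to the uncontrollable subspace satisfies B̄_c v = 0 in the Kalman controllability decomposition with λ ∉ spec(A_c), then a contradiction arises: v ∈ im B̄_cᵀ = (ker B̄_c)^⊥ while B̄_c v = 0 and v ≠ 0 is impossible. Hence if v ∈ Bᵀ ker(λI−A)ᵀ is nonzero and (A, Bv) has uncontrollable decomposition with B̄_c v = 0, then λ ∈ spec(A_c). -/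
open Matrix

/-!
Split a left eigenvector `η` of `A` at `λ` along the blocks as `(η₁, η₂)`. Because `A` is block
upper triangular, `η₁` satisfies the left eigen-equation of `A_c` at `λ`. If `η₁ ≠ 0`, then `λ`
is an eigenvalue of `A_c`. If `η₁ = 0`, then `v = B̄_cᴴ η₂` lies in the range of `B̄_cᴴ`, which
is orthogonal to the kernel of `B̄_c`; since `B̄_c v = 0`, this forces `v = 0`.
-/

namespace Matrix

variable {l m n α : Type*}

theorem fromBlocks_zero₂₁_conjTranspose_mulVec_comp_inl [Fintype l] [Fintype m] [Semiring α]
    [StarRing α] (A : Matrix l l α) (B : Matrix l m α) (D : Matrix m m α) (η : l ⊕ m → α) :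
    ((fromBlocks A B 0 D)ᴴ *ᵥ η) ∘ Sum.inl = Aᴴ *ᵥ (η ∘ Sum.inl) := by
  ext i
  simp [fromBlocks_conjTranspose, mulVec, dotProduct, Fintype.sum_sum_type]

theorem smul_one_sub_fromBlocks_zero₂₁ [DecidableEq l] [DecidableEq m] [Ring α] (r : α)
    (A : Matrix l l α) (B : Matrix l m α) (D : Matrix m m α) :
    r • (1 : Matrix (l ⊕ m) (l ⊕ m) α) - fromBlocks A B 0 D
      = fromBlocks (r • 1 - A) (-B) 0 (r • 1 - D) := by
  simp only [← fromBlocks_one, fromBlocks_smul, sub_eq_add_neg, fromBlocks_neg, fromBlocks_add,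
    smul_zero, neg_zero, add_zero, zero_add]

theorem mem_spectrum_of_conjTranspose_mulVec_eq_zero [Fintype n] [DecidableEq n] [CommRing α]
    [IsDomain α] [StarRing α] {M : Matrix n n α} {r : α} {x : n → α} (hx : x ≠ 0)
    (h : (r • 1 - M)ᴴ *ᵥ x = 0) : r ∈ spectrum α M := by
  have hdet : (r • 1 - M)ᴴ.det = 0 := exists_mulVec_eq_zero_iff.mp ⟨x, hx, h⟩
  rw [det_conjTranspose, star_eq_zero] at hdet
  rw [spectrum.mem_iff, Algebra.algebraMap_eq_smul_one, isUnit_iff_isUnit_det, hdet]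
  exact not_isUnit_zero

theorem eq_zero_of_mulVec_eq_zero_of_eq_conjTranspose_mulVec [Fintype m] [Fintype n]
    [CommRing α] [StarRing α] [PartialOrder α] [StarOrderedRing α] [NoZeroDivisors α]
    {M : Matrix m n α} {v : n → α} {η : m → α} (hker : M *ᵥ v = 0) (hrange : v = Mᴴ *ᵥ η) :
    v = 0 := by
  rw [← dotProduct_star_self_eq_zero]
  calc star v ⬝ᵥ v = star η ᵥ* M ⬝ᵥ v := by
        rw [hrange, star_mulVec, conjTranspose_conjTranspose]
    _ = 0 := by rw [← dotProduct_mulVec, hker, dotProduct_zero]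

end Matrix

theorem kalman_uncontrollable_contradiction_general {n1 n2 m : ℕ}
    (Ac : Matrix (Fin n1) (Fin n1) ℂ) (A12 : Matrix (Fin n1) (Fin n2) ℂ)
    (Abar : Matrix (Fin n2) (Fin n2) ℂ)
    (Bc : Matrix (Fin n1) (Fin m) ℂ) (Bbar : Matrix (Fin n2) (Fin m) ℂ)
    (lam : ℂ) (v : Fin m → ℂ) (hv : v ≠ 0)
    (A : Matrix (Fin n1 ⊕ Fin n2) (Fin n1 ⊕ Fin n2) ℂ)
    (B : Matrix (Fin n1 ⊕ Fin n2) (Fin m) ℂ)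
    (hA : A = Matrix.fromBlocks Ac A12 0 Abar)
    (hB : B = Matrix.fromRows Bc Bbar)
    (hdir : ∃ η : Fin n1 ⊕ Fin n2 → ℂ,
        Matrix.mulVec (lam • (1 : Matrix (Fin n1 ⊕ Fin n2) (Fin n1 ⊕ Fin n2) ℂ) - A)ᴴ η = 0 ∧
        v = Matrix.mulVec Bᴴ η)
    (hBbar : Matrix.mulVec Bbar v = 0) :
    lam ∈ spectrum ℂ Ac := by
  obtain ⟨η, hη, hvη⟩ := hdir
  subst hA hB
  have hleft : (lam • 1 - Ac)ᴴ *ᵥ (η ∘ Sum.inl) = 0 := by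
    rw [← fromBlocks_zero₂₁_conjTranspose_mulVec_comp_inl _ (-A12) (lam • 1 - Abar),
      ← smul_one_sub_fromBlocks_zero₂₁, hη]
    rfl
  by_cases hη₁ : η ∘ Sum.inl = 0
  · open scoped ComplexOrder in
    refine absurd
      (eq_zero_of_mulVec_eq_zero_of_eq_conjTranspose_mulVec (η := η ∘ Sum.inr) hBbar ?_) hv
    rw [hvη, conjTranspose_fromRows_eq_fromCols_conjTranspose, fromCols_mulVec, hη₁,
      mulVec_zero, zero_add]
  · exact mem_spectrum_of_conjTranspose_mulVec_eq_zero hη₁ hleft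

/-- Kalman decomposition step. Suppose `A = [[A_c, A₁₂],[0, Ā_c]]`,
`B = [B_c; B̄_c]`, `λ ∈ spec(A)`, and `0 ≠ v = Bᴴη` for some `η` with
`(λI − A)ᴴη = 0` (i.e. `v` lies in the input pole direction `Bᵀ ker(λI−A)ᵀ`).
If `B̄_c v = 0`, then `λ ∈ spec(A_c)`. -/
theorem kalman_uncontrollable_contradiction {n1 n2 m : ℕ}
    (Ac : Matrix (Fin n1) (Fin n1) ℂ) (A12 : Matrix (Fin n1) (Fin n2) ℂ)
    (Abar : Matrix (Fin n2) (Fin n2) ℂ)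
    (Bc : Matrix (Fin n1) (Fin m) ℂ) (Bbar : Matrix (Fin n2) (Fin m) ℂ)
    (lam : ℂ) (v : Fin m → ℂ) (hv : v ≠ 0)
    (A : Matrix (Fin n1 ⊕ Fin n2) (Fin n1 ⊕ Fin n2) ℂ)
    (B : Matrix (Fin n1 ⊕ Fin n2) (Fin m) ℂ)
    (hA : A = Matrix.fromBlocks Ac A12 0 Abar)
    (hB : B = Matrix.fromRows Bc Bbar)
    (hlam : lam ∈ spectrum ℂ A)
    (hdir : ∃ η : Fin n1 ⊕ Fin n2 → ℂ,
        Matrix.mulVec (lam • (1 : Matrix (Fin n1 ⊕ Fin n2) (Fin n1 ⊕ Fin n2) ℂ) - A)ᴴ η = 0 ∧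
        v = Matrix.mulVec Bᴴ η)
    (hBbar : Matrix.mulVec Bbar v = 0) :
    lam ∈ spectrum ℂ Ac :=
  kalman_uncontrollable_contradiction_general Ac A12 Abar Bc Bbar lam v hv A B hA hB hdir hBbar
end

section
/- Let G(s) = D + C(sI−A)^{-1}B be a minimal realization and λ an eigenvalue of A. If v is a nonzero vector in Bᵀ ker((λI−A)ᵀ) (the input pole direction of G at λ), then the vector-valued rational function s ↦ G(s)v has a pole at λ (it is unbounded near λ). -/
open Matrix Topology Filter

/-! If `w = η̄`, then `w (λI - A) = 0` and `w B = v*`, so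
`(s - λ) · w (sI - A)⁻¹ B v = ‖v‖² ≠ 0` and `x(s) = (sI - A)⁻¹ B v` is unbounded near `λ`.
Observability at `λ` makes `x ↦ ((λI - A) x, C x)` injective, hence bounded below; since
`(λI - A) x(s) = (λ - s) x(s) + B v`, a bound on `C x(s)` near `λ` would bound `x(s)` there. -/

section Resolvent

variable {𝕜 : Type*} [NontriviallyNormedField 𝕜] {n p : Type*} [Fintype n]

theorem norm_dotProduct_le (w x : n → 𝕜) : ‖w ⬝ᵥ x‖ ≤ (∑ i, ‖w i‖) * ‖x‖ :=
  calc ‖w ⬝ᵥ x‖ ≤ ∑ i, ‖w i‖ * ‖x i‖ := (norm_sum_le _ _).trans_eq (by simp only [norm_mul])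
    _ ≤ ∑ i, ‖w i‖ * ‖x‖ := by gcongr with i; exact norm_le_pi_norm x i
    _ = (∑ i, ‖w i‖) * ‖x‖ := (Finset.sum_mul ..).symm

variable [DecidableEq n]

theorem eventually_isUnit_det_smul_one_sub (A : Matrix n n 𝕜) (μ : 𝕜) :
    ∀ᶠ s in 𝓝[≠] μ, IsUnit (s • (1 : Matrix n n 𝕜) - A).det := by
  have hopen : IsOpen (spectrum 𝕜 A \ {μ})ᶜ :=
    (A.finite_spectrum.subset Set.sdiff_subset).isClosed.isOpen_compl
  filter_upwards [nhdsWithin_le_nhds (hopen.mem_nhds (by simp)), self_mem_nhdsWithin]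
    with s hs hsμ
  have hs : s ∉ spectrum 𝕜 A := fun h => hs ⟨h, hsμ⟩
  rw [spectrum.notMem_iff, Algebra.algebraMap_eq_smul_one] at hs
  exact (isUnit_iff_isUnit_det _).mp hs

theorem sub_mul_dotProduct_inv_mulVec {R : Type*} [CommRing R] {A : Matrix n n R} {μ s : R}
    {w : n → R} (hw : w ᵥ* (μ • 1 - A) = 0) (hs : IsUnit (s • (1 : Matrix n n R) - A).det)
    (y : n → R) : (s - μ) * (w ⬝ᵥ (s • 1 - A)⁻¹ *ᵥ y) = w ⬝ᵥ y := by
  have hwM : w ᵥ* (s • 1 - A) = (s - μ) • w := by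
    rw [show s • 1 - A = (s - μ) • (1 : Matrix n n R) + (μ • 1 - A) by module,
      vecMul_add, hw, add_zero, vecMul_smul, vecMul_one]
  rw [← smul_eq_mul, ← smul_dotProduct, ← hwM, ← dotProduct_mulVec, mulVec_mulVec,
    mul_nonsing_inv _ hs, one_mulVec]

theorem not_exists_eventually_norm_inv_mulVec_le {A : Matrix n n 𝕜} {μ : 𝕜} {w y : n → 𝕜}
    (hw : w ᵥ* (μ • 1 - A) = 0) (hwy : w ⬝ᵥ y ≠ 0) :
    ¬ ∃ R : ℝ, ∀ᶠ s in 𝓝[≠] μ, ‖(s • (1 : Matrix n n 𝕜) - A)⁻¹ *ᵥ y‖ ≤ R := by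
  rintro ⟨R, hR⟩
  have hsub : Tendsto (fun s => s - μ) (𝓝[≠] μ) (𝓝[≠] 0) := by
    have h := (map_subRight_nhdsNE (c := μ) (a := μ)).le
    rwa [sub_self] at h
  have hblow : Tendsto (fun s => ‖(s - μ)⁻¹‖ * ‖w ⬝ᵥ y‖) (𝓝[≠] μ) atTop :=
    (tendsto_norm_inv_nhdsNE_zero_atTop.comp hsub).atTop_mul_const (norm_pos_iff.mpr hwy)
  obtain ⟨s, hs, hunit, hRs, hsμ⟩ := ((hblow.eventually_gt_atTop ((∑ i, ‖w i‖) * R)).and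
    ((eventually_isUnit_det_smul_one_sub A μ).and (hR.and self_mem_nhdsWithin))).exists
  have hid := sub_mul_dotProduct_inv_mulVec hw hunit y
  have hsμ : s - μ ≠ 0 := sub_ne_zero.mpr hsμ
  rw [← hid, norm_mul, norm_inv, inv_mul_cancel_left₀ (norm_ne_zero_iff.mpr hsμ)] at hs
  exact hs.not_ge ((norm_dotProduct_le _ _).trans (by gcongr))

theorem exists_norm_le_of_observable [CompleteSpace 𝕜] [Fintype p] {A : Matrix n n 𝕜}
    {C : Matrix p n 𝕜} {μ : 𝕜} (hobs : ∀ x, A *ᵥ x = μ • x → C *ᵥ x = 0 → x = 0) :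
    ∃ K > (0 : ℝ), ∀ x, ‖x‖ ≤ K * (‖(μ • 1 - A) *ᵥ x‖ + ‖C *ᵥ x‖) := by
  let f := (μ • 1 - A).mulVecLin.prod C.mulVecLin
  have hker : LinearMap.ker f = ⊥ := by
    refine LinearMap.ker_eq_bot'.mpr fun x hx => hobs x ?_ (congrArg Prod.snd hx)
    have h : (μ • 1 - A) *ᵥ x = 0 := congrArg Prod.fst hx
    rw [sub_mulVec, smul_mulVec, one_mulVec, sub_eq_zero] at h
    exact h.symm
  obtain ⟨K, hK, hf⟩ := f.exists_antilipschitzWith hker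
  refine ⟨K, hK, fun x => ?_⟩
  have h := hf.le_mul_dist x 0
  rw [dist_zero_right, map_zero, dist_zero_right] at h
  exact h.trans (by gcongr; exact max_le_add_of_nonneg (norm_nonneg _) (norm_nonneg _))

theorem exists_eventually_norm_inv_mulVec_le_of_observable [CompleteSpace 𝕜] [Fintype p]
    {A : Matrix n n 𝕜} {C : Matrix p n 𝕜} {μ : 𝕜}
    (hobs : ∀ x, A *ᵥ x = μ • x → C *ᵥ x = 0 → x = 0) (y : n → 𝕜)
    (hC : ∃ Cb : ℝ, ∀ᶠ s in 𝓝[≠] μ, ‖C *ᵥ ((s • (1 : Matrix n n 𝕜) - A)⁻¹ *ᵥ y)‖ ≤ Cb) :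
    ∃ R : ℝ, ∀ᶠ s in 𝓝[≠] μ, ‖(s • (1 : Matrix n n 𝕜) - A)⁻¹ *ᵥ y‖ ≤ R := by
  obtain ⟨Cb, hCb⟩ := hC
  obtain ⟨K, hK, hKx⟩ := exists_norm_le_of_observable hobs
  have hnear : ∀ᶠ s in 𝓝[≠] μ, K * ‖μ - s‖ ≤ 1 / 2 := by
    have h := (by fun_prop : Continuous fun s : 𝕜 => K * ‖μ - s‖).tendsto μ
    rw [sub_self, norm_zero, mul_zero] at h
    exact nhdsWithin_le_nhds (h.eventually_le_const (by norm_num))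
  refine ⟨2 * K * (‖y‖ + Cb), ?_⟩
  filter_upwards [hCb, hnear, eventually_isUnit_det_smul_one_sub A μ] with s hCs hs hunit
  set x := (s • (1 : Matrix n n 𝕜) - A)⁻¹ *ᵥ y
  have hx : (μ • 1 - A) *ᵥ x = (μ - s) • x + y := by
    rw [show μ • 1 - A = (μ - s) • (1 : Matrix n n 𝕜) + (s • 1 - A) by module, add_mulVec,
      smul_mulVec, one_mulVec, mulVec_mulVec, mul_nonsing_inv _ hunit, one_mulVec]
  have h := hKx x
  rw [hx] at h
  have hsplit := norm_add_le ((μ - s) • x) y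
  rw [norm_smul] at hsplit
  -- the term `K ‖μ - s‖ ‖x‖ ≤ ‖x‖ / 2` is absorbed into the left-hand side
  nlinarith [norm_nonneg x]

end Resolvent

theorem input_pole_direction_gives_pole_general {n m p : ℕ}
    (A : Matrix (Fin n) (Fin n) ℂ) (B : Matrix (Fin n) (Fin m) ℂ)
    (C : Matrix (Fin p) (Fin n) ℂ) (D : Matrix (Fin p) (Fin m) ℂ)
    (hobsv : ∀ (μ' : ℂ) (x : Fin n → ℂ),
      Matrix.mulVec A x = μ' • x → Matrix.mulVec C x = 0 → x = 0)
    (lam : ℂ)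
    (v : Fin m → ℂ) (hv : v ≠ 0)
    (hdir : ∃ η : Fin n → ℂ,
      Matrix.mulVec (lam • (1 : Matrix (Fin n) (Fin n) ℂ) - A)ᴴ η = 0 ∧
      v = Matrix.mulVec Bᴴ η) :
    ¬ ∃ Cb : ℝ, ∀ᶠ s in 𝓝[≠] lam,
        ‖Matrix.mulVec (D + C * (s • (1 : Matrix (Fin n) (Fin n) ℂ) - A)⁻¹ * B) v‖ ≤ Cb := by
  rintro ⟨Cb, hCb⟩
  obtain ⟨η, hη, hvη⟩ := hdir
  have hleft : star η ᵥ* (lam • 1 - A) = 0 := by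
    simpa [star_mulVec] using congrArg star hη
  have hpair : star η ⬝ᵥ B *ᵥ v ≠ 0 := by
    rw [dotProduct_mulVec, ← conjTranspose_conjTranspose B, ← star_mulVec, ← hvη]
    open ComplexOrder in exact dotProduct_star_self_eq_zero.not.mpr hv
  refine not_exists_eventually_norm_inv_mulVec_le hleft hpair
    (exists_eventually_norm_inv_mulVec_le_of_observable (hobsv lam) _
      ⟨Cb + ‖D *ᵥ v‖, hCb.mono fun s hs => ?_⟩)
  rw [add_mulVec, ← mulVec_mulVec, ← mulVec_mulVec] at hs
  exact (norm_le_add_norm_add' (D *ᵥ v) _).trans (add_le_add_left hs _)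

/-- for a minimal realization `G(s) = D + C(sI−A)⁻¹B` (PBH
controllability and observability) and an eigenvalue `λ` of `A`, any nonzero `v` in
the input pole direction `Bᵀ ker((λI−A)ᵀ)` yields a pole of `s ↦ G(s)v` at `λ`:
this vector-valued function is unbounded near `λ`. -/
theorem input_pole_direction_gives_pole {n m p : ℕ}
    (A : Matrix (Fin n) (Fin n) ℂ) (B : Matrix (Fin n) (Fin m) ℂ)
    (C : Matrix (Fin p) (Fin n) ℂ) (D : Matrix (Fin p) (Fin m) ℂ)
    (hctrb : ∀ (μ' : ℂ) (w : Fin n → ℂ),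
      Matrix.vecMul w A = μ' • w → Matrix.vecMul w B = 0 → w = 0)
    (hobsv : ∀ (μ' : ℂ) (x : Fin n → ℂ),
      Matrix.mulVec A x = μ' • x → Matrix.mulVec C x = 0 → x = 0)
    (lam : ℂ) (hlam : lam ∈ spectrum ℂ A)
    (v : Fin m → ℂ) (hv : v ≠ 0)
    (hdir : ∃ η : Fin n → ℂ,
      Matrix.mulVec (lam • (1 : Matrix (Fin n) (Fin n) ℂ) - A)ᴴ η = 0 ∧
      v = Matrix.mulVec Bᴴ η) :
    ¬ ∃ Cb : ℝ, ∀ᶠ s in 𝓝[≠] lam,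
        ‖Matrix.mulVec (D + C * (s • (1 : Matrix (Fin n) (Fin n) ℂ) - A)⁻¹ * B) v‖ ≤ Cb :=
  input_pole_direction_gives_pole_general A B C D hobsv lam v hv hdir
end
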